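/- There exists a Jordan curve in ℂ whose trace has positive two-dimensional Lebesgue measure. -/

import Mathlib

/-!
Knopp's variant of Osgood's construction. A triangle with base `uv` and apex `w` is replaced by
the two triangles with bases `uw`, `wv` and apices `u + α (v - u)`, `u + (1 - α) (v - u)`. For
`α = 1/2` these are the two halves of the triangle; for `α = (1 - ε)/2` a thin middle triangle is
removed, and each child has `α` times the area of its parent. Starting from the right isosceles
triangle on `[0, 1]` with `ε_n = 2^-(n+7)`, the `2^n` triangles of level `n` have total area
`∏ (1 - ε_j) ≥ 1 - ∑ ε_j` times the initial one. They form a chain from `0` to `1`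
in which consecutive triangles share a vertex and all others are disjoint, and the shapes stay
close to right isosceles, so the diameters decay like `(3/4)^n`. The nested triangles therefore
define an arc from `0` to `1`, in the closed upper half-plane, containing the limit set, which has
positive area; a parabolic arc below the real axis closes it into a Jordan curve.
-/

open Set Filter Topology MeasureTheory

noncomputable section

lemma one_sub_sum_le_prod_one_sub {ι R : Type*} [CommRing R] [LinearOrder R]
    [IsStrictOrderedRing R] (s : Finset ι) {f : ι → R} (h0 : ∀ i ∈ s, 0 ≤ f i)
    (h1 : ∀ i ∈ s, f i ≤ 1) :
    1 - ∑ i ∈ s, f i ≤ ∏ i ∈ s, (1 - f i) := by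
  classical
  induction s using Finset.induction_on with
  | empty => simp
  | insert a s ha ih =>
    rw [Finset.sum_insert ha, Finset.prod_insert ha]
    have hs := Finset.sum_nonneg fun i hi => h0 i (Finset.mem_insert_of_mem hi)
    have ha0 := h0 a (Finset.mem_insert_self a s)
    have ha1 := h1 a (Finset.mem_insert_self a s)
    have ih' := mul_le_mul_of_nonneg_left (ih (fun i hi => h0 i (Finset.mem_insert_of_mem hi))
      (fun i hi => h1 i (Finset.mem_insert_of_mem hi))) (sub_nonneg.mpr ha1)
    nlinarith [mul_nonneg ha0 hs]

namespace AddCircle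

variable {𝕜 B : Type*} [AddCommGroup 𝕜] [LinearOrder 𝕜] [IsOrderedAddMonoid 𝕜] [Archimedean 𝕜]
  {p a : 𝕜} [Fact (0 < p)] {f : 𝕜 → B}

lemma injective_liftIco (hf : InjOn f (Ico a (a + p))) : Function.Injective (liftIco p a f) :=
  hf.injective.comp (equivIco p a).injective

lemma range_liftIco : range (liftIco p a f) = f '' Ico a (a + p) := by
  rw [liftIco, (equivIco p a).surjective.range_comp, range_domRestrict]

end AddCircle

def dyadicIndex (n : ℕ) (t : ℝ) : ℕ := min ⌊2 ^ n * t⌋₊ (2 ^ n - 1)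

lemma dyadicIndex_lt (n : ℕ) (t : ℝ) : dyadicIndex n t < 2 ^ n := by
  have := Nat.one_le_two_pow (n := n)
  unfold dyadicIndex
  omega

lemma dyadicIndex_zero_left (t : ℝ) : dyadicIndex 0 t = 0 := by
  simpa using dyadicIndex_lt 0 t

lemma dyadicIndex_succ_div_two (n : ℕ) (t : ℝ) : dyadicIndex (n + 1) t / 2 = dyadicIndex n t := by
  have hfloor : ⌊(2 : ℝ) ^ (n + 1) * t⌋₊ / 2 = ⌊(2 : ℝ) ^ n * t⌋₊ := by
    rw [← Nat.floor_div_natCast, pow_succ]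
    congr 1
    push_cast
    ring
  have := Nat.one_le_two_pow (n := n)
  unfold dyadicIndex
  rw [show 2 ^ (n + 1) = 2 * 2 ^ n by ring]
  omega

lemma dyadicIndex_le_add_one {n : ℕ} {t s : ℝ} (h : s ≤ t + (1 / 2) ^ n) :
    dyadicIndex n s ≤ dyadicIndex n t + 1 := by
  have hfloor : ⌊(2 : ℝ) ^ n * s⌋₊ ≤ ⌊(2 : ℝ) ^ n * t⌋₊ + 1 := by
    have hs : (2 : ℝ) ^ n * s ≤ (2 : ℝ) ^ n * t + 1 := by
      calc (2 : ℝ) ^ n * s ≤ 2 ^ n * (t + (1 / 2) ^ n) := by gcongr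
        _ = 2 ^ n * t + 1 := by rw [mul_add, ← mul_pow]; norm_num
    rcases le_total 0 ((2 : ℝ) ^ n * t) with ht | ht
    · exact (Nat.floor_le_floor hs).trans (Nat.floor_add_one ht).le
    · have : ⌊(2 : ℝ) ^ n * s⌋₊ ≤ ⌊(1 : ℝ)⌋₊ := Nat.floor_le_floor (by linarith)
      simp only [Nat.floor_one] at this
      omega
  unfold dyadicIndex
  omega

lemma add_two_le_dyadicIndex {n : ℕ} {t s : ℝ} (ht : 0 ≤ t) (hs : s ≤ 1)
    (h : t + 3 * (1 / 2) ^ n ≤ s) : dyadicIndex n t + 2 ≤ dyadicIndex n s := by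
  have hscaled : (⌊(2 : ℝ) ^ n * t⌋₊ : ℝ) + 3 ≤ 2 ^ n * s := by
    have hfloor := Nat.floor_le (mul_nonneg (by positivity : (0 : ℝ) ≤ 2 ^ n) ht)
    calc (⌊(2 : ℝ) ^ n * t⌋₊ : ℝ) + 3 ≤ 2 ^ n * (t + 3 * (1 / 2) ^ n) := by
          rw [mul_add, mul_left_comm, ← mul_pow]; norm_num; linarith
      _ ≤ 2 ^ n * s := by gcongr
  have h1 : ⌊(2 : ℝ) ^ n * t⌋₊ + 3 ≤ ⌊(2 : ℝ) ^ n * s⌋₊ := Nat.le_floor (by exact_mod_cast hscaled)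
  have h2 : ⌊(2 : ℝ) ^ n * t⌋₊ + 3 ≤ 2 ^ n := by
    have : (2 : ℝ) ^ n * s ≤ 2 ^ n := by nlinarith [pow_pos (two_pos : (0 : ℝ) < 2) n]
    exact_mod_cast hscaled.trans this
  unfold dyadicIndex
  omega

lemma dyadicIndex_div_two_pow {n k : ℕ} (hk : k < 2 ^ n) : dyadicIndex n (k / 2 ^ n) = k := by
  have : (2 : ℝ) ^ n * (k / 2 ^ n) = k := by field_simp
  unfold dyadicIndex
  rw [this, Nat.floor_natCast]
  omega

lemma dyadicIndex_zero (n : ℕ) : dyadicIndex n 0 = 0 := by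
  simp [dyadicIndex]

lemma dyadicIndex_one (n : ℕ) : dyadicIndex n 1 = 2 ^ n - 1 := by
  have : (2 : ℝ) ^ n * 1 = (2 ^ n : ℕ) := by push_cast; ring
  unfold dyadicIndex
  rw [this, Nat.floor_natCast]
  exact min_eq_right (Nat.sub_le _ _)

/-- `piece n k`, for `k < 2 ^ n`, is to be the part of an arc parametrized by
`[k / 2 ^ n, (k + 1) / 2 ^ n]`. -/
structure DyadicChain (X : Type*) [MetricSpace X] where
  piece : ℕ → ℕ → Set X
  isCompact_piece (n k : ℕ) : IsCompact (piece n k)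
  piece_succ_subset (n k : ℕ) : piece (n + 1) k ⊆ piece n (k / 2)
  inter_succ_nonempty {n k : ℕ} : k + 1 < 2 ^ n → (piece n k ∩ piece n (k + 1)).Nonempty
  disjoint_piece {n k l : ℕ} : k + 1 < l → l < 2 ^ n → Disjoint (piece n k) (piece n l)
  mesh : ℕ → ℝ
  tendsto_mesh : Tendsto mesh atTop (𝓝 0)
  dist_le_mesh {n k : ℕ} {x y : X} : x ∈ piece n k → y ∈ piece n k → dist x y ≤ mesh n

namespace DyadicChain

variable {X : Type*} [MetricSpace X] (S : DyadicChain X)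

lemma piece_nonempty {n k : ℕ} (hk : k < 2 ^ n) : (S.piece n k).Nonempty := by
  obtain ⟨x, hx, -⟩ :=
    S.inter_succ_nonempty (n := n + 1) (k := 2 * k) (by rw [Nat.pow_succ]; omega)
  exact ⟨x, by simpa using S.piece_succ_subset n (2 * k) hx⟩

lemma eq_of_forall_mem_piece {k : ℕ → ℕ} {x y : X} (hx : ∀ n, x ∈ S.piece n (k n))
    (hy : ∀ n, y ∈ S.piece n (k n)) : x = y :=
  dist_le_zero.mp <| ge_of_tendsto' S.tendsto_mesh fun n => S.dist_le_mesh (hx n) (hy n)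

lemma dist_le_two_mul_mesh {n k l : ℕ} (hk : k < 2 ^ n) (hl : l < 2 ^ n) (hkl : k ≤ l + 1)
    (hlk : l ≤ k + 1) {x y : X} (hx : x ∈ S.piece n k) (hy : y ∈ S.piece n l) :
    dist x y ≤ 2 * S.mesh n := by
  wlog hle : k ≤ l generalizing k l x y
  · rw [dist_comm]
    exact this hl hk hlk hkl hy hx (by omega)
  obtain rfl | rfl : l = k ∨ l = k + 1 := by omega
  · have := S.dist_le_mesh hx hx
    linarith [S.dist_le_mesh hx hy, dist_self x]
  · obtain ⟨z, hzk, hzl⟩ := S.inter_succ_nonempty hl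
    linarith [dist_triangle x z y, S.dist_le_mesh hx hzk, S.dist_le_mesh hzl hy]

lemma iInter_piece_dyadicIndex_nonempty (t : ℝ) :
    (⋂ n, S.piece n (dyadicIndex n t)).Nonempty := by
  refine IsCompact.nonempty_iInter_of_sequence_nonempty_isCompact_isClosed _ (fun n => ?_)
    (fun n => S.piece_nonempty (dyadicIndex_lt n t)) (S.isCompact_piece 0 _)
    (fun n => (S.isCompact_piece n _).isClosed)
  simpa only [dyadicIndex_succ_div_two] using S.piece_succ_subset n (dyadicIndex (n + 1) t)

def arc (t : ℝ) : X := (S.iInter_piece_dyadicIndex_nonempty t).some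

lemma arc_mem_piece (n : ℕ) (t : ℝ) : S.arc t ∈ S.piece n (dyadicIndex n t) :=
  mem_iInter.mp (S.iInter_piece_dyadicIndex_nonempty t).some_mem n

lemma dist_arc_le {n : ℕ} {s t : ℝ} (h : |s - t| ≤ (1 / 2) ^ n) :
    dist (S.arc s) (S.arc t) ≤ 2 * S.mesh n := by
  have h' := abs_sub_le_iff.mp h
  exact S.dist_le_two_mul_mesh (dyadicIndex_lt n s) (dyadicIndex_lt n t)
    (dyadicIndex_le_add_one (by linarith)) (dyadicIndex_le_add_one (by linarith))
    (S.arc_mem_piece n s) (S.arc_mem_piece n t)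

lemma continuous_arc : Continuous S.arc := by
  refine Metric.continuous_iff.mpr fun t ε hε => ?_
  obtain ⟨n, hn⟩ :=
    ((S.tendsto_mesh.const_mul 2).eventually (gt_mem_nhds (by simpa using hε))).exists
  refine ⟨(1 / 2) ^ n, by positivity, fun s hs => (S.dist_arc_le ?_).trans_lt hn⟩
  exact (Real.dist_eq s t ▸ hs).le

lemma injOn_arc : InjOn S.arc (Icc 0 1) := by
  intro t ht s hs heq
  by_contra hne
  wlog hts : t < s generalizing t s
  · exact this hs ht heq.symm (Ne.symm hne) ((Ne.lt_or_gt hne).resolve_left hts)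
  obtain ⟨n, hn⟩ := exists_pow_lt_of_lt_one (by linarith : 0 < (s - t) / 3)
    (by norm_num : (1 / 2 : ℝ) < 1)
  have hfar := add_two_le_dyadicIndex (n := n) ht.1 hs.2 (by linarith)
  exact (S.disjoint_piece (by omega) (dyadicIndex_lt n s)).ne_of_mem
    (S.arc_mem_piece n t) (S.arc_mem_piece n s) heq

def limitSet : Set X := ⋂ n, ⋃ k ∈ Finset.range (2 ^ n), S.piece n k

lemma limitSet_subset_image_arc : S.limitSet ⊆ S.arc '' Icc 0 1 := by
  intro z hz
  rw [← ((isCompact_Icc.image S.continuous_arc).isClosed).closure_eq, Metric.mem_closure_iff]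
  intro ε hε
  obtain ⟨n, hn⟩ := (S.tendsto_mesh.eventually (gt_mem_nhds hε)).exists
  obtain ⟨k, hk, hzk⟩ := mem_iUnion₂.mp (mem_iInter.mp hz n)
  rw [Finset.mem_range] at hk
  have hmem := S.arc_mem_piece n (k / 2 ^ n)
  rw [dyadicIndex_div_two_pow hk] at hmem
  refine ⟨_, ⟨k / 2 ^ n, ⟨by positivity, ?_⟩, rfl⟩, (S.dist_le_mesh hzk hmem).trans_lt hn⟩
  rw [div_le_one (by positivity)]
  exact_mod_cast hk.le

lemma le_measure_limitSet [MeasurableSpace X] [OpensMeasurableSpace X] (μ : Measure X)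
    [IsFiniteMeasureOnCompacts μ] {m : ENNReal}
    (hm : ∀ n, m ≤ μ (⋃ k ∈ Finset.range (2 ^ n), S.piece n k)) : m ≤ μ S.limitSet := by
  have hcompact : ∀ n, IsCompact (⋃ k ∈ Finset.range (2 ^ n), S.piece n k) := fun n =>
    (Finset.range _).isCompact_biUnion fun k _ => S.isCompact_piece n k
  have hanti : Antitone fun n => ⋃ k ∈ Finset.range (2 ^ n), S.piece n k := by
    refine antitone_nat_of_succ_le fun n => iUnion₂_subset fun k hk => ?_
    refine (S.piece_succ_subset n k).trans (subset_biUnion_of_mem (u := S.piece n) ?_)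
    simp only [Finset.coe_range, mem_Iio, Finset.mem_range, Nat.pow_succ] at hk ⊢
    omega
  exact ge_of_tendsto (tendsto_measure_iInter_atTop
      (fun n => (hcompact n).isClosed.measurableSet.nullMeasurableSet) hanti
      ⟨0, (hcompact 0).measure_lt_top.ne⟩) (Eventually.of_forall hm)

end DyadicChain

open Complex in
lemma exists_jordan_curve_superset_of_arc {γ : ℝ → ℂ} (hcont : Continuous γ)
    (hinj : InjOn γ (Icc 0 1)) (h0 : γ 0 = 0) (h1 : γ 1 = 1)
    (him : ∀ t ∈ Icc (0 : ℝ) 1, 0 ≤ (γ t).im) :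
    ∃ J : Circle → ℂ, Continuous J ∧ Function.Injective J ∧ γ '' Icc 0 1 ⊆ range J := by
  set lower : ℝ → ℂ := fun t => ((2 - t : ℝ) : ℂ) - ((t - 1) * (2 - t) : ℝ) * I with hlower
  have hlower_re (t : ℝ) : (lower t).re = 2 - t := by simp [hlower]
  have hlower_im (t : ℝ) : (lower t).im = -((t - 1) * (2 - t)) := by simp [hlower]
  set loop : ℝ → ℂ := fun t => if t ≤ 1 then γ t else lower t with hloop
  have hcont_loop : Continuous loop := by
    refine Continuous.if_le hcont (by fun_prop) continuous_id continuous_const fun t ht => ?_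
    norm_num [hlower, ht, h1]
  have hinj_loop : InjOn loop (Ico 0 (0 + 2)) := by
    rintro t ⟨ht0, ht2⟩ s ⟨hs0, hs2⟩ hts
    simp only [zero_add] at ht2 hs2
    by_cases ht : t ≤ 1 <;> by_cases hs : s ≤ 1 <;>
      simp only [hloop, ht, hs, if_true, if_false] at hts
    · exact hinj ⟨ht0, ht⟩ ⟨hs0, hs⟩ hts
    · have := him t ⟨ht0, ht⟩
      rw [hts, hlower_im] at this
      nlinarith
    · have := him s ⟨hs0, hs⟩
      rw [← hts, hlower_im] at this
      nlinarith
    · simpa [hlower_re] using congrArg re hts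
  have hperiodic : loop 0 = loop (0 + 2) := by simp [hloop, h0, hlower]
  have : Fact ((0 : ℝ) < 2) := ⟨two_pos⟩
  let e := AddCircle.homeomorphCircle (two_ne_zero : (2 : ℝ) ≠ 0)
  refine ⟨AddCircle.liftIco 2 0 loop ∘ e.symm,
    (AddCircle.liftIco_continuous hperiodic hcont_loop.continuousOn).comp e.symm.continuous,
    (AddCircle.injective_liftIco hinj_loop).comp e.symm.injective, ?_⟩
  rw [e.symm.surjective.range_comp, AddCircle.range_liftIco]
  rintro _ ⟨t, ⟨ht0, ht1⟩, rfl⟩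
  exact ⟨t, ⟨ht0, by linarith⟩, by simp [hloop, ht1]⟩

namespace Osgood

open Complex

structure Triangle where
  u : ℂ
  v : ℂ
  w : ℂ

namespace Triangle

variable (t : Triangle)

def carrier : Set ℂ :=
  {z | ∃ b c : ℝ, 0 ≤ b ∧ 0 ≤ c ∧ b + c ≤ 1 ∧ z = t.u + b * (t.v - t.u) + c * (t.w - t.u)}

def det : ℝ := (t.v - t.u).re * (t.w - t.u).im - (t.v - t.u).im * (t.w - t.u).re

lemma mem_carrier {b c : ℝ} (hb : 0 ≤ b) (hc : 0 ≤ c) (hbc : b + c ≤ 1) :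
    t.u + b * (t.v - t.u) + c * (t.w - t.u) ∈ t.carrier :=
  ⟨b, c, hb, hc, hbc, rfl⟩

lemma u_mem_carrier : t.u ∈ t.carrier := by
  simpa using t.mem_carrier le_rfl le_rfl (by norm_num)

lemma v_mem_carrier : t.v ∈ t.carrier := by
  simpa using t.mem_carrier zero_le_one le_rfl (by norm_num)

lemma w_mem_carrier : t.w ∈ t.carrier := by
  simpa using t.mem_carrier le_rfl zero_le_one (by norm_num)

lemma carrier_subset_of_mem {t' : Triangle} (hu : t'.u ∈ t.carrier) (hv : t'.v ∈ t.carrier)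
    (hw : t'.w ∈ t.carrier) : t'.carrier ⊆ t.carrier := by
  obtain ⟨b₁, c₁, hb₁, hc₁, hbc₁, hu⟩ := hu
  obtain ⟨b₂, c₂, hb₂, hc₂, hbc₂, hv⟩ := hv
  obtain ⟨b₃, c₃, hb₃, hc₃, hbc₃, hw⟩ := hw
  rintro _ ⟨s, s', hs, hs', hss', rfl⟩
  have h : 0 ≤ 1 - s - s' := by linarith
  refine ⟨(1 - s - s') * b₁ + s * b₂ + s' * b₃, (1 - s - s') * c₁ + s * c₂ + s' * c₃,
    by positivity, by positivity, by nlinarith, ?_⟩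
  rw [hu, hv, hw]
  push_cast
  ring

lemma norm_sub_u_le {z : ℂ} (hz : z ∈ t.carrier) :
    ‖z - t.u‖ ≤ max ‖t.v - t.u‖ ‖t.w - t.u‖ := by
  obtain ⟨b, c, hb, hc, hbc, rfl⟩ := hz
  calc ‖t.u + b * (t.v - t.u) + c * (t.w - t.u) - t.u‖
      ≤ b * ‖t.v - t.u‖ + c * ‖t.w - t.u‖ := by
        rw [add_sub_right_comm, add_sub_cancel_left]
        simpa [norm_mul, abs_of_nonneg hb, abs_of_nonneg hc] using
          norm_add_le ((b : ℂ) * (t.v - t.u)) (c * (t.w - t.u))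
    _ ≤ b * max ‖t.v - t.u‖ ‖t.w - t.u‖ + c * max ‖t.v - t.u‖ ‖t.w - t.u‖ := by
        gcongr
        exacts [le_max_left _ _, le_max_right _ _]
    _ ≤ max ‖t.v - t.u‖ ‖t.w - t.u‖ := by
        nlinarith [(norm_nonneg _).trans (le_max_left ‖t.v - t.u‖ ‖t.w - t.u‖)]

lemma dist_le_of_mem_carrier {z z' : ℂ} (hz : z ∈ t.carrier) (hz' : z' ∈ t.carrier) :
    dist z z' ≤ 2 * max ‖t.v - t.u‖ ‖t.w - t.u‖ := by
  rw [dist_eq_norm, ← sub_sub_sub_cancel_right z z' t.u]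
  linarith [norm_sub_le (z - t.u) (z' - t.u), t.norm_sub_u_le hz, t.norm_sub_u_le hz']

def stdTriangle : Set ℂ := {z | 0 ≤ z.re ∧ 0 ≤ z.im ∧ z.re + z.im ≤ 1}

lemma isCompact_stdTriangle : IsCompact stdTriangle := by
  refine Metric.isCompact_of_isClosed_isBounded ?_ ?_
  · exact (isClosed_le continuous_const continuous_re).inter
      ((isClosed_le continuous_const continuous_im).inter
        (isClosed_le (continuous_re.add continuous_im) continuous_const))
  · refine (Metric.isBounded_closedBall (x := (0 : ℂ)) (r := 2)).subset fun z ⟨h1, h2, h3⟩ => ?_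
    have := norm_le_abs_re_add_abs_im z
    rw [abs_of_nonneg h1, abs_of_nonneg h2] at this
    rw [Metric.mem_closedBall, dist_zero_right]
    linarith

lemma volume_stdTriangle_pos : 0 < volume stdTriangle := by
  have hopen : IsOpen {z : ℂ | 0 < z.re ∧ 0 < z.im ∧ z.re + z.im < 1} :=
    (isOpen_lt continuous_const continuous_re).inter
      ((isOpen_lt continuous_const continuous_im).inter
        (isOpen_lt (continuous_re.add continuous_im) continuous_const))
  refine (hopen.measure_pos volume ⟨1 / 4 + 1 / 4 * I, by norm_num⟩).trans_le
    (measure_mono fun z ⟨h1, h2, h3⟩ => ⟨h1.le, h2.le, h3.le⟩)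

def linearPart : ℂ →ₗ[ℝ] ℂ := reLm.smulRight (t.v - t.u) + imLm.smulRight (t.w - t.u)

lemma det_linearPart : LinearMap.det t.linearPart = t.det := by
  rw [← LinearMap.det_toMatrix basisOneI, Matrix.det_fin_two]
  simp only [LinearMap.toMatrix_apply, linearPart, det, coe_basisOneI, coe_basisOneI_repr,
    LinearMap.add_apply, LinearMap.coe_smulRight, reLm_coe, imLm_coe, Matrix.cons_val_zero,
    Matrix.cons_val_one, Matrix.cons_val_fin_one, one_re, one_im, I_re, I_im, one_smul, zero_smul,
    add_zero, zero_add, Finsupp.coe_sub, Pi.sub_apply, map_sub, sub_re, sub_im]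
  ring

lemma carrier_eq_image : t.carrier = (t.u + ·) '' (t.linearPart '' stdTriangle) := by
  rw [← image_comp]
  ext z
  constructor
  · rintro ⟨b, c, hb, hc, hbc, rfl⟩
    exact ⟨⟨b, c⟩, ⟨hb, hc, hbc⟩, by simp [linearPart, add_assoc]⟩
  · rintro ⟨x, ⟨h1, h2, h3⟩, rfl⟩
    exact ⟨x.re, x.im, h1, h2, h3, by simp [linearPart, add_assoc]⟩

lemma isCompact_carrier : IsCompact t.carrier := by
  rw [carrier_eq_image]
  exact (isCompact_stdTriangle.image t.linearPart.continuous_of_finiteDimensional).image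
    (continuous_const_add t.u)

lemma volume_carrier : volume t.carrier = ENNReal.ofReal |t.det| * volume stdTriangle := by
  rw [carrier_eq_image, image_add_left, measure_preimage_add,
    Measure.addHaar_image_linearMap, det_linearPart]

def left (α : ℝ) : Triangle := ⟨t.u, t.w, t.u + α * (t.v - t.u)⟩

def right (α : ℝ) : Triangle := ⟨t.w, t.v, t.u + (1 - α) * (t.v - t.u)⟩

variable {α : ℝ}

lemma det_left : (t.left α).det = -α * t.det := by
  simp only [det, left, add_re, add_im, sub_re, sub_im, mul_re, mul_im, ofReal_re, ofReal_im]
  ring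

lemma det_right : (t.right α).det = -α * t.det := by
  simp only [det, right, add_re, add_im, sub_re, sub_im, mul_re, mul_im, ofReal_re, ofReal_im,
    one_re, one_im]
  ring

lemma left_carrier_subset (h0 : 0 ≤ α) (h1 : α ≤ 1) : (t.left α).carrier ⊆ t.carrier :=
  t.carrier_subset_of_mem t.u_mem_carrier t.w_mem_carrier
    (by simpa [left] using t.mem_carrier h0 le_rfl (by simpa using h1))

lemma right_carrier_subset (h0 : 0 ≤ α) (h1 : α ≤ 1) : (t.right α).carrier ⊆ t.carrier :=
  t.carrier_subset_of_mem t.w_mem_carrier t.v_mem_carrier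
    (by simpa [right] using t.mem_carrier (by linarith : 0 ≤ 1 - α) le_rfl (by linarith))

/-- For `α < 1/2` the children `t.left α` and `t.right α` lie on opposite sides of the median
from `w` and touch it only at `w`. -/
def medianSide (z : ℂ) : ℝ := Triangle.det ⟨t.w, (t.u + t.v) / 2, z⟩

lemma medianSide_u : t.medianSide t.u = -(1 / 2) * t.det := by
  simp only [medianSide, det, add_re, add_im, sub_re, sub_im, div_ofNat_re, div_ofNat_im]
  ring

lemma medianSide_v : t.medianSide t.v = 1 / 2 * t.det := by
  simp only [medianSide, det, add_re, add_im, sub_re, sub_im, div_ofNat_re, div_ofNat_im]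
  ring

lemma exists_medianSide_of_mem_left (hα : α < 1 / 2) {z : ℂ} (hz : z ∈ (t.left α).carrier) :
    ∃ s, 0 ≤ s ∧ (s = 0 → z = t.w) ∧ t.medianSide z = -s * t.det := by
  obtain ⟨b, c, hb, hc, hbc, rfl⟩ := hz
  refine ⟨(1 - b) / 2 - c * α, by nlinarith, fun hs => ?_, ?_⟩
  · obtain rfl : c = 0 := by nlinarith
    obtain rfl : b = 1 := by linarith
    simp [left]
  · simp only [medianSide, det, left, add_re, add_im, sub_re, sub_im, mul_re, mul_im, ofReal_re,
      ofReal_im, div_ofNat_re, div_ofNat_im]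
    ring

lemma exists_medianSide_of_mem_right (hα : α < 1 / 2) {z : ℂ} (hz : z ∈ (t.right α).carrier) :
    ∃ s, 0 ≤ s ∧ (s = 0 → z = t.w) ∧ t.medianSide z = s * t.det := by
  obtain ⟨b, c, hb, hc, hbc, rfl⟩ := hz
  refine ⟨b / 2 + c * (1 / 2 - α), by nlinarith, fun hs => ?_, ?_⟩
  · obtain rfl : c = 0 := by nlinarith
    obtain rfl : b = 0 := by linarith
    simp [right]
  · simp only [medianSide, det, right, add_re, add_im, sub_re, sub_im, mul_re, mul_im, ofReal_re,
      ofReal_im, div_ofNat_re, div_ofNat_im, one_re, one_im]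
    ring

lemma left_inter_right_subset (hdet : t.det ≠ 0) (hα : α < 1 / 2) :
    (t.left α).carrier ∩ (t.right α).carrier ⊆ {t.w} := by
  rintro z ⟨hl, hr⟩
  obtain ⟨s, hs, hsw, hside⟩ := t.exists_medianSide_of_mem_left hα hl
  obtain ⟨s', hs', -, hside'⟩ := t.exists_medianSide_of_mem_right hα hr
  have : -s = s' := mul_right_cancel₀ hdet (hside.symm.trans hside')
  exact hsw (by linarith)

lemma v_not_mem_left (hdet : t.det ≠ 0) (hα : α < 1 / 2) : t.v ∉ (t.left α).carrier := by
  intro hv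
  obtain ⟨s, hs, -, hside⟩ := t.exists_medianSide_of_mem_left hα hv
  have : 1 / 2 = -s := mul_right_cancel₀ hdet (t.medianSide_v.symm.trans hside)
  linarith

lemma u_not_mem_right (hdet : t.det ≠ 0) (hα : α < 1 / 2) : t.u ∉ (t.right α).carrier := by
  intro hu
  obtain ⟨s, hs, -, hside⟩ := t.exists_medianSide_of_mem_right hα hu
  have : -(1 / 2) = s := mul_right_cancel₀ hdet (t.medianSide_u.symm.trans hside)
  linarith

end Triangle

section RightApex

variable {c : ℂ}

lemma mul_one_sub_eq_half (hc : (2 * c - 1) ^ 2 = -1) : c * (1 - c) = 1 / 2 := by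
  linear_combination (-1 / 4 : ℂ) * hc

lemma norm_two_mul_sub_one (hc : (2 * c - 1) ^ 2 = -1) : ‖2 * c - 1‖ = 1 := by
  have h := congrArg norm hc
  rw [norm_pow, norm_neg, norm_one] at h
  exact (pow_eq_one_iff_of_nonneg (norm_nonneg _) two_ne_zero).mp h

lemma norm_one_sub (hc : (2 * c - 1) ^ 2 = -1) : ‖1 - c‖ = ‖c‖ := by
  have hre := congrArg re hc
  have him := congrArg im hc
  simp only [sq, mul_re, mul_im, sub_re, sub_im, re_ofNat, im_ofNat, one_re, one_im, neg_re,
    neg_im] at hre him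
  have hhalf : c.re = 1 / 2 := by nlinarith
  rw [← sq_eq_sq₀ (norm_nonneg _) (norm_nonneg _), Complex.sq_norm, Complex.sq_norm,
    normSq_apply, normSq_apply]
  simp only [sub_re, sub_im, one_re, one_im, hhalf]
  ring

lemma sq_norm_eq_half (hc : (2 * c - 1) ^ 2 = -1) : ‖c‖ ^ 2 = 1 / 2 := by
  have h := congrArg norm (mul_one_sub_eq_half hc)
  rw [norm_mul, norm_one_sub hc] at h
  simpa [sq] using h

end RightApex

lemma norm_real_div_two_mul {ε : ℝ} (hε : 0 ≤ ε) (z : ℂ) : ‖(ε : ℂ) / 2 * z‖ = ε / 2 * ‖z‖ := by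
  simp [abs_of_nonneg hε]

namespace Triangle

variable (t : Triangle) {c : ℂ} {r ε : ℝ}

def dev (c : ℂ) : ℂ := t.w - t.u - c * (t.v - t.u)

/-- For `c = (1 ± I) / 2`, so that `1 - c = conj c`, this bounds by `r` the ratio
`|ζ - c| / |ζ - conj c|` at `ζ = (w - u) / (v - u)`: the apex is close to that of the right
isosceles triangle on the base `uv`. Halving the triangle acts on `ζ` by Möbius maps preserving
this ratio while swapping `c` and `conj c`; a gap `ε` in the splitting adds at most `2 ε`. -/
def IsNear (c : ℂ) (r : ℝ) : Prop := ‖t.dev c‖ ≤ r * ‖t.dev (1 - c)‖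

lemma dev_left (hc : c * (1 - c) = 1 / 2) :
    (t.left ((1 - ε) / 2)).dev (1 - c) = -(1 - c) * t.dev c - ε / 2 * (t.v - t.u) := by
  simp only [dev, left]
  push_cast
  linear_combination (-(t.v - t.u)) * hc

lemma dev_right (hc : c * (1 - c) = 1 / 2) :
    (t.right ((1 - ε) / 2)).dev (1 - c) = -c * t.dev c + ε / 2 * (t.v - t.u) := by
  simp only [dev, right]
  push_cast
  linear_combination (t.v - t.u) * hc

lemma norm_v_sub_u_le (hc : (2 * c - 1) ^ 2 = -1) :
    ‖t.v - t.u‖ ≤ ‖t.dev c‖ + ‖t.dev (1 - c)‖ := by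
  have : t.dev (1 - c) - t.dev c = (2 * c - 1) * (t.v - t.u) := by simp only [dev]; ring
  have hnorm := norm_sub_le (t.dev (1 - c)) (t.dev c)
  rw [this, norm_mul, norm_two_mul_sub_one hc, one_mul] at hnorm
  linarith

lemma IsNear.of_norm_dev_le (hc : (2 * c - 1) ^ 2 = -1) (hr0 : 0 ≤ r) (hr : r ≤ 1 / 16)
    (hε0 : 0 ≤ ε) (hε : ε ≤ 1 / 64) {t t' : Triangle} (h : t.IsNear c r)
    (hP : ‖t'.dev (1 - c)‖ ≤ ‖c‖ * ‖t.dev c‖ + ε / 2 * ‖t.v - t.u‖)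
    (hQ : ‖c‖ * ‖t.dev (1 - c)‖ - ε / 2 * ‖t.v - t.u‖ ≤ ‖t'.dev c‖) :
    t'.IsNear (1 - c) (r + 2 * ε) := by
  unfold IsNear
  rw [sub_sub_cancel]
  set P := ‖t.dev c‖
  set Q := ‖t.dev (1 - c)‖
  set L := ‖t.v - t.u‖
  have hPQ : P ≤ r * Q := h
  have hQ0 : 0 ≤ Q := norm_nonneg _
  have hκ : 7 / 10 ≤ ‖c‖ := by nlinarith [sq_norm_eq_half hc, norm_nonneg c]
  have hL : L ≤ 17 / 16 * Q := by
    nlinarith [t.norm_v_sub_u_le hc, mul_le_mul_of_nonneg_right hr hQ0]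
  have hP' : ‖t'.dev (1 - c)‖ ≤ ‖c‖ * (r * Q) + ε / 2 * L := by
    nlinarith [mul_le_mul_of_nonneg_left hPQ (norm_nonneg c)]
  have hQ' := mul_le_mul_of_nonneg_left hQ (by linarith : 0 ≤ r + 2 * ε)
  have hLQ : L * (1 + r + 2 * ε) ≤ 4 * ‖c‖ * Q := by
    nlinarith [mul_le_mul_of_nonneg_right hκ hQ0,
      mul_le_mul_of_nonneg_left hL (by linarith : 0 ≤ 1 + r + 2 * ε)]
  nlinarith [mul_le_mul_of_nonneg_left hLQ hε0]

lemma IsNear.left (hc : (2 * c - 1) ^ 2 = -1) (hr0 : 0 ≤ r) (hr : r ≤ 1 / 16) (hε0 : 0 ≤ ε)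
    (hε : ε ≤ 1 / 64) {t : Triangle} (h : t.IsNear c r) :
    (t.left ((1 - ε) / 2)).IsNear (1 - c) (r + 2 * ε) := by
  have hP := t.dev_left (ε := ε) (mul_one_sub_eq_half hc)
  have hQ := t.dev_left (ε := ε) (c := 1 - c) (by linear_combination (-1 / 4 : ℂ) * hc)
  rw [sub_sub_cancel] at hQ
  refine h.of_norm_dev_le hc hr0 hr hε0 hε ?_ ?_
  · rw [hP, ← norm_one_sub hc, ← norm_real_div_two_mul hε0, ← norm_neg (1 - c), ← norm_mul]
    exact norm_sub_le _ _
  · rw [hQ, ← norm_real_div_two_mul hε0, ← norm_neg c, ← norm_mul]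
    exact norm_sub_norm_le _ _

lemma IsNear.right (hc : (2 * c - 1) ^ 2 = -1) (hr0 : 0 ≤ r) (hr : r ≤ 1 / 16) (hε0 : 0 ≤ ε)
    (hε : ε ≤ 1 / 64) {t : Triangle} (h : t.IsNear c r) :
    (t.right ((1 - ε) / 2)).IsNear (1 - c) (r + 2 * ε) := by
  have hP := t.dev_right (ε := ε) (mul_one_sub_eq_half hc)
  have hQ := t.dev_right (ε := ε) (c := 1 - c) (by linear_combination (-1 / 4 : ℂ) * hc)
  rw [sub_sub_cancel] at hQ
  refine h.of_norm_dev_le hc hr0 hr hε0 hε ?_ ?_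
  · rw [hP, ← norm_real_div_two_mul hε0, ← norm_neg c, ← norm_mul]
    exact norm_add_le _ _
  · rw [hQ, ← norm_one_sub hc, ← norm_real_div_two_mul hε0, ← norm_neg (1 - c), ← norm_mul,
      ← norm_neg (_ * _ : ℂ)]
    simpa [sub_eq_add_neg] using
      norm_sub_norm_le (-(1 - c) * t.dev (1 - c)) (-(ε / 2 * (t.v - t.u)))

lemma IsNear.norm_le (hc : (2 * c - 1) ^ 2 = -1) (hr0 : 0 ≤ r) (hr : r ≤ 1 / 32)
    {t : Triangle} (h : t.IsNear c r) :
    ‖t.w - t.u‖ ≤ 3 / 4 * ‖t.v - t.u‖ ∧ ‖t.v - t.w‖ ≤ 3 / 4 * ‖t.v - t.u‖ := by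
  have hQ : ‖t.dev (1 - c)‖ ≤ ‖t.dev c‖ + ‖t.v - t.u‖ := by
    have : t.dev (1 - c) = t.dev c + (2 * c - 1) * (t.v - t.u) := by simp only [dev]; ring
    rw [this, ← one_mul ‖t.v - t.u‖, ← norm_two_mul_sub_one hc, ← norm_mul]
    exact norm_add_le _ _
  have hP : ‖t.dev c‖ ≤ 1 / 31 * ‖t.v - t.u‖ := by
    have h' : ‖t.dev c‖ ≤ r * ‖t.dev (1 - c)‖ := h
    nlinarith [mul_le_mul_of_nonneg_left hQ hr0,
      mul_le_mul_of_nonneg_right hr (norm_nonneg (t.dev c)),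
      mul_le_mul_of_nonneg_right hr (norm_nonneg (t.v - t.u))]
  have hκ : ‖c‖ ≤ 71 / 100 := by nlinarith [sq_norm_eq_half hc, norm_nonneg c]
  have hL := norm_nonneg (t.v - t.u)
  constructor
  · have : t.w - t.u = t.dev c + c * (t.v - t.u) := by simp only [dev]; ring
    rw [this]
    nlinarith [norm_add_le (t.dev c) (c * (t.v - t.u)), norm_mul c (t.v - t.u)]
  · have : t.v - t.w = (1 - c) * (t.v - t.u) - t.dev c := by simp only [dev]; ring
    rw [this]
    nlinarith [norm_sub_le ((1 - c) * (t.v - t.u)) (t.dev c), norm_mul (1 - c) (t.v - t.u),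
      norm_one_sub hc]

end Triangle

def gap (n : ℕ) : ℝ := (1 / 2) ^ (n + 7)

def ratio (n : ℕ) : ℝ := (1 - gap n) / 2

lemma gap_nonneg (n : ℕ) : 0 ≤ gap n := by unfold gap; positivity

lemma sum_gap_le (n : ℕ) : ∑ j ∈ Finset.range n, gap j ≤ 1 / 64 := by
  simp only [gap, pow_add, ← Finset.sum_mul]
  nlinarith [sum_geometric_two_le n]

lemma gap_le (n : ℕ) : gap n ≤ 1 / 64 := by
  simpa [Finset.sum_range_succ] using
    (Finset.single_le_sum (fun j _ => gap_nonneg j) (Finset.self_mem_range_succ n)).trans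
      (sum_gap_le (n + 1))

lemma ratio_pos (n : ℕ) : 0 < ratio n := by
  have := gap_le n; unfold ratio; linarith

lemma ratio_lt_half (n : ℕ) : ratio n < 1 / 2 := by
  have : 0 < gap n := by unfold gap; positivity
  unfold ratio; linarith

def node : ℕ → ℕ → Triangle
  | 0, _ => ⟨0, 1, (1 + I) / 2⟩
  | n + 1, k =>
    if k % 2 = 0 then (node n (k / 2)).left (ratio n) else (node n (k / 2)).right (ratio n)

@[simp] lemma node_succ_two_mul (n m : ℕ) : node (n + 1) (2 * m) = (node n m).left (ratio n) := by
  simp [node]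

@[simp] lemma node_succ_two_mul_add_one (n m : ℕ) :
    node (n + 1) (2 * m + 1) = (node n m).right (ratio n) := by
  simp [node, Nat.add_mod, Nat.add_div]

lemma isNear_node (n k : ℕ) :
    ∃ c : ℂ, (2 * c - 1) ^ 2 = -1 ∧
      (node n k).IsNear c (2 * ∑ j ∈ Finset.range n, gap j) := by
  induction n generalizing k with
  | zero => exact ⟨(1 + I) / 2, by ring_nf; simp, by simp [Triangle.IsNear, Triangle.dev, node]⟩
  | succ n ih =>
    have hr0 : 0 ≤ 2 * ∑ j ∈ Finset.range n, gap j :=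
      mul_nonneg zero_le_two (Finset.sum_nonneg fun j _ => gap_nonneg j)
    have hr : 2 * ∑ j ∈ Finset.range n, gap j ≤ 1 / 16 := by linarith [sum_gap_le n]
    rw [Finset.sum_range_succ, mul_add]
    obtain ⟨m, rfl | rfl⟩ := Nat.even_or_odd' k
    · obtain ⟨c, hc, hnear⟩ := ih m
      refine ⟨1 - c, by linear_combination hc, ?_⟩
      exact node_succ_two_mul n m ▸ hnear.left hc hr0 hr (gap_nonneg n) (gap_le n)
    · obtain ⟨c, hc, hnear⟩ := ih m
      refine ⟨1 - c, by linear_combination hc, ?_⟩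
      exact node_succ_two_mul_add_one n m ▸ hnear.right hc hr0 hr (gap_nonneg n) (gap_le n)

lemma norm_node_le (n k : ℕ) :
    ‖(node n k).w - (node n k).u‖ ≤ 3 / 4 * ‖(node n k).v - (node n k).u‖ ∧
      ‖(node n k).v - (node n k).w‖ ≤ 3 / 4 * ‖(node n k).v - (node n k).u‖ := by
  obtain ⟨c, hc, hnear⟩ := isNear_node n k
  exact hnear.norm_le hc (mul_nonneg zero_le_two (Finset.sum_nonneg fun j _ => gap_nonneg j))
    (by linarith [sum_gap_le n])

lemma norm_base_node_le (n k : ℕ) : ‖(node n k).v - (node n k).u‖ ≤ (3 / 4) ^ n := by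
  induction n generalizing k with
  | zero => simp [node]
  | succ n ih =>
    obtain ⟨m, rfl | rfl⟩ := Nat.even_or_odd' k
    · rw [node_succ_two_mul, pow_succ']
      exact (norm_node_le n m).1.trans (by gcongr; exact ih m)
    · rw [node_succ_two_mul_add_one, pow_succ']
      exact (norm_node_le n m).2.trans (by gcongr; exact ih m)

lemma dist_le_of_mem_node {n k : ℕ} {z z' : ℂ} (hz : z ∈ (node n k).carrier)
    (hz' : z' ∈ (node n k).carrier) : dist z z' ≤ 2 * (3 / 4) ^ n := by
  refine ((node n k).dist_le_of_mem_carrier hz hz').trans ?_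
  have := norm_base_node_le n k
  gcongr
  exact max_le this ((norm_node_le n k).1.trans
    (by linarith [norm_nonneg ((node n k).v - (node n k).u)]))

lemma abs_det_node (n k : ℕ) : |(node n k).det| = (∏ j ∈ Finset.range n, ratio j) / 2 := by
  induction n generalizing k with
  | zero => simp [node, Triangle.det]
  | succ n ih =>
    obtain ⟨m, rfl | rfl⟩ := Nat.even_or_odd' k
    · rw [node_succ_two_mul, Triangle.det_left, abs_mul, abs_neg, abs_of_pos (ratio_pos n), ih,
        Finset.prod_range_succ]
      ring
    · rw [node_succ_two_mul_add_one, Triangle.det_right, abs_mul, abs_neg,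
        abs_of_pos (ratio_pos n), ih, Finset.prod_range_succ]
      ring

lemma det_node_ne_zero (n k : ℕ) : (node n k).det ≠ 0 := by
  rw [← abs_pos, abs_det_node]
  exact half_pos (Finset.prod_pos fun j _ => ratio_pos j)

lemma carrier_node_succ_subset (n k : ℕ) :
    (node (n + 1) k).carrier ⊆ (node n (k / 2)).carrier := by
  have h0 := (ratio_pos n).le
  have h1 : ratio n ≤ 1 := by linarith [ratio_lt_half n]
  obtain ⟨m, rfl | rfl⟩ := Nat.even_or_odd' k
  · simpa using (node n m).left_carrier_subset h0 h1
  · simpa [Nat.mul_add_div] using (node n m).right_carrier_subset h0 h1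

lemma node_v_eq_node_succ_u {n k : ℕ} (hk : k + 1 < 2 ^ n) :
    (node n k).v = (node n (k + 1)).u := by
  induction n generalizing k with
  | zero => simp at hk
  | succ n ih =>
    obtain ⟨m, rfl | rfl⟩ := Nat.even_or_odd' k
    · simp [Triangle.left, Triangle.right]
    · rw [show 2 * m + 1 + 1 = 2 * (m + 1) by ring, node_succ_two_mul_add_one, node_succ_two_mul]
      exact ih (by rw [pow_succ] at hk; omega)

lemma node_u_zero (n : ℕ) : (node n 0).u = 0 := by
  induction n with
  | zero => rfl
  | succ n ih => exact ih

lemma node_v_last (n : ℕ) : (node n (2 ^ n - 1)).v = 1 := by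
  induction n with
  | zero => rfl
  | succ n ih =>
    have := Nat.one_le_two_pow (n := n)
    rw [show 2 ^ (n + 1) - 1 = 2 * (2 ^ n - 1) + 1 by rw [pow_succ]; omega,
      node_succ_two_mul_add_one]
    exact ih

lemma inter_carrier_node_subset {n k l : ℕ} (hkl : k < l) (hl : l < 2 ^ n) :
    (node n k).carrier ∩ (node n l).carrier ⊆ {z | l = k + 1 ∧ z = (node n k).v} := by
  induction n generalizing k l with
  | zero => simp at hl; omega
  | succ n ih =>
    rintro z ⟨hzk, hzl⟩
    have hl' : l / 2 < 2 ^ n := by rw [pow_succ] at hl; omega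
    by_cases hsib : k / 2 = l / 2
    · obtain ⟨m, rfl, rfl⟩ : ∃ m, k = 2 * m ∧ l = 2 * m + 1 := ⟨k / 2, by omega, by omega⟩
      rw [node_succ_two_mul] at hzk ⊢
      rw [node_succ_two_mul_add_one] at hzl
      exact ⟨rfl, (node n m).left_inter_right_subset (det_node_ne_zero n m) (ratio_lt_half n)
        ⟨hzk, hzl⟩⟩
    -- `z` is the vertex shared by the two parents, which lies in neither of their inner children
    obtain ⟨hadj, hzv⟩ := ih (by omega) hl'
      ⟨carrier_node_succ_subset n k hzk, carrier_node_succ_subset n l hzl⟩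
    have hzu : z = (node n (l / 2)).u := hzv.trans (hadj ▸ node_v_eq_node_succ_u (hadj ▸ hl'))
    obtain ⟨m, rfl | rfl⟩ := Nat.even_or_odd' k
    · rw [node_succ_two_mul] at hzk
      rw [show 2 * m / 2 = m by omega] at hzv
      exact ((node n m).v_not_mem_left (det_node_ne_zero n m) (ratio_lt_half n) (hzv ▸ hzk)).elim
    obtain ⟨m', rfl | rfl⟩ := Nat.even_or_odd' l
    · rw [node_succ_two_mul_add_one]
      rw [show (2 * m + 1) / 2 = m by omega] at hzv hadj
      exact ⟨by omega, hzv⟩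
    · rw [node_succ_two_mul_add_one] at hzl
      rw [show (2 * m' + 1) / 2 = m' by omega] at hzu
      exact ((node n m').u_not_mem_right (det_node_ne_zero n m') (ratio_lt_half n)
        (hzu ▸ hzl)).elim

def chain : DyadicChain ℂ where
  piece n k := (node n k).carrier
  isCompact_piece n k := (node n k).isCompact_carrier
  piece_succ_subset := carrier_node_succ_subset
  inter_succ_nonempty {n k} hk :=
    ⟨(node n k).v, (node n k).v_mem_carrier,
      node_v_eq_node_succ_u hk ▸ (node n (k + 1)).u_mem_carrier⟩
  disjoint_piece {n k l} hkl hl := Set.disjoint_left.mpr fun _ hzk hzl =>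
    absurd (inter_carrier_node_subset (by omega) hl ⟨hzk, hzl⟩).1 (by omega)
  mesh n := 2 * (3 / 4) ^ n
  tendsto_mesh := by
    simpa using (tendsto_pow_atTop_nhds_zero_of_lt_one (r := (3 / 4 : ℝ)) (by norm_num)
      (by norm_num)).const_mul 2
  dist_le_mesh := dist_le_of_mem_node

lemma le_volume_iUnion_piece (n : ℕ) :
    ENNReal.ofReal (1 / 4) * volume Triangle.stdTriangle ≤
      volume (⋃ k ∈ Finset.range (2 ^ n), chain.piece n k) := by
  have hdisj : (Finset.range (2 ^ n) : Set ℕ).Pairwise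
      (Function.onFun (AEDisjoint volume) (chain.piece n)) := by
    intro k hk l hl hkl
    wlog hlt : k < l generalizing k l
    · exact (this hl hk hkl.symm (by omega)).symm
    exact measure_mono_null (inter_carrier_node_subset hlt (by simpa using hl) |>.trans
      fun z hz => hz.2) (measure_singleton _)
  rw [measure_biUnion_finset₀ hdisj fun k _ =>
    (chain.isCompact_piece n k).isClosed.measurableSet.nullMeasurableSet]
  simp only [chain, Triangle.volume_carrier, abs_det_node, Finset.sum_const, Finset.card_range,
    nsmul_eq_mul, ← mul_assoc]
  gcongr
  rw [← ENNReal.ofReal_natCast, ← ENNReal.ofReal_mul (by positivity)]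
  refine ENNReal.ofReal_le_ofReal ?_
  have hprod : ((2 ^ n : ℕ) : ℝ) * ∏ j ∈ Finset.range n, ratio j =
      ∏ j ∈ Finset.range n, (1 - gap j) := by
    rw [Nat.cast_pow, Nat.cast_ofNat, ← Finset.card_range n, ← Finset.prod_const,
      Finset.card_range, ← Finset.prod_mul_distrib]
    exact Finset.prod_congr rfl fun j _ => by unfold ratio; ring
  have hweier := one_sub_sum_le_prod_one_sub (Finset.range n) (fun j _ => gap_nonneg j)
    (fun j _ => (gap_le j).trans (by norm_num))
  nlinarith [sum_gap_le n]

lemma volume_limitSet_pos : 0 < volume chain.limitSet :=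
  (ENNReal.mul_pos (by simp) Triangle.volume_stdTriangle_pos.ne').trans_le
    (chain.le_measure_limitSet volume le_volume_iUnion_piece)

lemma arc_zero : chain.arc 0 = 0 :=
  chain.eq_of_forall_mem_piece (k := fun _ => 0)
    (fun n => dyadicIndex_zero n ▸ chain.arc_mem_piece n 0)
    (fun n => node_u_zero n ▸ (node n 0).u_mem_carrier)

lemma arc_one : chain.arc 1 = 1 :=
  chain.eq_of_forall_mem_piece (k := fun n => 2 ^ n - 1)
    (fun n => dyadicIndex_one n ▸ chain.arc_mem_piece n 1)
    (fun n => node_v_last n ▸ (node n _).v_mem_carrier)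

lemma im_arc_nonneg (t : ℝ) : 0 ≤ (chain.arc t).im := by
  obtain ⟨b, c, hb, hc, -, hz⟩ := dyadicIndex_zero_left t ▸ chain.arc_mem_piece 0 t
  simp only [node] at hz
  rw [hz]
  simpa using hc

end Osgood

end

open Osgood in
theorem exists_jordan_curve_positive_measure :
    ∃ γ : Circle → ℂ, Continuous γ ∧ Function.Injective γ ∧
      0 < volume (Set.range γ) := by
  obtain ⟨J, hJ, hJinj, hsub⟩ := exists_jordan_curve_superset_of_arc chain.continuous_arc
    chain.injOn_arc arc_zero arc_one fun t _ => im_arc_nonneg t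
  exact ⟨J, hJ, hJinj,
    volume_limitSet_pos.trans_le (measure_mono (chain.limitSet_subset_image_arc.trans hsub))⟩
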